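/- Let X ⊆ ℝ^n be a nonempty, closed, convex set, let A ∈ ℝ^{m×n}, b ∈ ℝ^m, and let h_j : ℝ^n → ℝ be continuously differentiable convex functions for j = 1,…,J. Suppose the feasible set 𝒳 := {x ∈ X : Ax = b and h_j(x) ≤ 0 for all j = 1,…,J} is nonempty. Define F : ℝ^n → ℝ^n by F(x) := Aᵀ(Ax − b) + Σ_{j=1}^J max{0, h_j(x)} ∇h_j(x). Then SOL(X,F) = 𝒳. -/

import Mathlib

open scoped RealInnerProductSpace

/-- The solution set `SOL(X,F)` of the variational inequality `VI(X,F)`: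
the set of `x ∈ X` such that `⟨F x, y − x⟩ ≥ 0` for all `y ∈ X`. -/
def VISol {n : ℕ} (X : Set (EuclideanSpace ℝ (Fin n)))
    (F : EuclideanSpace ℝ (Fin n) → EuclideanSpace ℝ (Fin n)) : Set (EuclideanSpace ℝ (Fin n)) :=
  {x | x ∈ X ∧ ∀ y ∈ X, 0 ≤ ⟪F x, y - x⟫}

/-!
`F` is the gradient of the penalty `½‖Ax − b‖² + ½ Σⱼ max{0, hⱼ}²`, which vanishes exactly on
the feasible set. Testing the variational inequality at `x` against a feasible point `y`, the
gradient inequality of each convex `hⱼ` gives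
`⟨F x, y − x⟩ ≤ −(‖Ax − b‖² + Σⱼ max{0, hⱼ x}²)`, so both residuals vanish and `x` is feasible.
Conversely `F x = 0` at feasible points, so they solve the variational inequality.
-/

theorem ConvexOn.apply_sub_le_sub_of_hasFDerivAt {E : Type*} [NormedAddCommGroup E]
    [NormedSpace ℝ E] {f : E → ℝ} {f' : E →L[ℝ] ℝ} {x : E}
    (hf : ConvexOn ℝ Set.univ f) (hx : HasFDerivAt f f' x) (y : E) :
    f' (y - x) ≤ f y - f x := by
  let ℓ : ℝ →ᵃ[ℝ] E := AffineMap.lineMap x y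
  have hline : ConvexOn ℝ Set.univ (f ∘ ℓ) := hf.comp_affineMap ℓ
  have hderiv : HasDerivAt (f ∘ ℓ) (f' (y - x)) 0 := by
    refine HasFDerivAt.comp_hasDerivAt (0 : ℝ) ?_ AffineMap.hasDerivAt_lineMap
    rwa [AffineMap.lineMap_apply_zero]
  simpa [ℓ, slope_def_field] using
    hline.le_slope_of_hasDerivAt (Set.mem_univ 0) (Set.mem_univ 1) zero_lt_one hderiv

section InnerProductSpace

variable {E : Type*} [NormedAddCommGroup E] [InnerProductSpace ℝ E] [CompleteSpace E]

theorem ConvexOn.inner_gradient_le_sub {f : E → ℝ} {x : E}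
    (hf : ConvexOn ℝ Set.univ f) (hx : DifferentiableAt ℝ f x) (y : E) :
    ⟪gradient f x, y - x⟫ ≤ f y - f x := by
  simpa using hf.apply_sub_le_sub_of_hasFDerivAt hx.hasGradientAt.hasFDerivAt y

theorem ConvexOn.max_zero_mul_inner_gradient_le {f : E → ℝ} {x y : E}
    (hf : ConvexOn ℝ Set.univ f) (hx : DifferentiableAt ℝ f x) (hy : f y ≤ 0) :
    max 0 (f x) * ⟪gradient f x, y - x⟫ ≤ -max 0 (f x) ^ 2 := by
  have hpos : max 0 (f x) * f x = max 0 (f x) ^ 2 := by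
    rcases le_total (f x) 0 with hneg | hnonneg
    · simp [max_eq_left hneg]
    · rw [max_eq_right hnonneg, sq]
  calc max 0 (f x) * ⟪gradient f x, y - x⟫
      ≤ max 0 (f x) * (f y - f x) :=
        mul_le_mul_of_nonneg_left (hf.inner_gradient_le_sub hx y) (le_max_left _ _)
    _ ≤ -max 0 (f x) ^ 2 := by
        nlinarith [mul_nonpos_of_nonneg_of_nonpos (le_max_left 0 (f x)) hy]

variable {G : Type*} [NormedAddCommGroup G] [InnerProductSpace ℝ G] [CompleteSpace G]

theorem inner_adjoint_sub_eq_neg_norm_sq (A : E →L[ℝ] G) {b : G} {x y : E} (hy : A y = b) :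
    ⟪ContinuousLinearMap.adjoint A (A x - b), y - x⟫ = -‖A x - b‖ ^ 2 := by
  rw [ContinuousLinearMap.adjoint_inner_left, map_sub, hy, ← neg_sub (A x) b, inner_neg_right,
    real_inner_self_eq_norm_sq]

theorem inner_penalty_field_le {ι : Type*} [Fintype ι] (A : E →L[ℝ] G) (b : G)
    (h : ι → E → ℝ) (hconv : ∀ j, ConvexOn ℝ Set.univ (h j)) {x y : E}
    (hx : ∀ j, DifferentiableAt ℝ (h j) x) (hAy : A y = b) (hhy : ∀ j, h j y ≤ 0) :
    ⟪ContinuousLinearMap.adjoint A (A x - b) + ∑ j, max 0 (h j x) • gradient (h j) x, y - x⟫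
      ≤ -(‖A x - b‖ ^ 2 + ∑ j, max 0 (h j x) ^ 2) := by
  rw [inner_add_left, sum_inner, inner_adjoint_sub_eq_neg_norm_sq A hAy, neg_add,
    ← Finset.sum_neg_distrib]
  gcongr with j
  rw [real_inner_smul_left]
  exact (hconv j).max_zero_mul_inner_gradient_le (hx j) (hhy j)

end InnerProductSpace

theorem VISol_eq_feasible_set_general {n m J : ℕ}
    (X : Set (EuclideanSpace ℝ (Fin n)))
    (A : EuclideanSpace ℝ (Fin n) →L[ℝ] EuclideanSpace ℝ (Fin m))
    (b : EuclideanSpace ℝ (Fin m))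
    (h : Fin J → EuclideanSpace ℝ (Fin n) → ℝ)
    (hsmooth : ∀ j, ContDiff ℝ 1 (h j))
    (hconv : ∀ j, ConvexOn ℝ Set.univ (h j))
    (hfeas : {x | x ∈ X ∧ A x = b ∧ ∀ j, h j x ≤ 0}.Nonempty)
    (F : EuclideanSpace ℝ (Fin n) → EuclideanSpace ℝ (Fin n))
    (hF : ∀ x, F x = ContinuousLinearMap.adjoint A (A x - b)
      + ∑ j, max 0 (h j x) • gradient (h j) x) :
    VISol X F = {x | x ∈ X ∧ A x = b ∧ ∀ j, h j x ≤ 0} := by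
  ext x
  constructor
  · rintro ⟨hxX, hsol⟩
    obtain ⟨y, hyX, hAy, hhy⟩ := hfeas
    have hdiff j : DifferentiableAt ℝ (h j) x := (hsmooth j).differentiable one_ne_zero x
    have hres : ‖A x - b‖ ^ 2 + ∑ j, max 0 (h j x) ^ 2 = 0 := by
      have hle := (hsol y hyX).trans_eq (congrArg (⟪·, y - x⟫) (hF x)) |>.trans
        (inner_penalty_field_le A b h hconv hdiff hAy hhy)
      have hnonneg : 0 ≤ ‖A x - b‖ ^ 2 + ∑ j, max 0 (h j x) ^ 2 := by positivity
      linarith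
    rw [add_eq_zero_iff_of_nonneg (by positivity) (by positivity),
      Finset.sum_eq_zero_iff_of_nonneg fun j _ => sq_nonneg _] at hres
    obtain ⟨hAx, hh⟩ := hres
    refine ⟨hxX, by simpa [sub_eq_zero] using hAx, fun j => ?_⟩
    simpa using hh j (Finset.mem_univ j)
  · rintro ⟨hxX, hAx, hh⟩
    refine ⟨hxX, fun y _ => ?_⟩
    simp [hF, hAx, max_eq_left (hh _)]

/-- For a nonempty closed convex `X ⊆ ℝ^n`, a linear map `A : ℝ^n → ℝ^m`
(with adjoint `Aᵀ`), `b ∈ ℝ^m`, and continuously differentiable convex `h_j`, if the feasible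
set `𝒳 = {x ∈ X : Ax = b, h_j(x) ≤ 0 ∀j}` is nonempty, then for
`F(x) = Aᵀ(Ax − b) + Σⱼ max{0, h_j(x)} ∇h_j(x)` one has `SOL(X,F) = 𝒳`. -/
theorem VISol_eq_feasible_set {n m J : ℕ}
    (X : Set (EuclideanSpace ℝ (Fin n)))
    (hXne : X.Nonempty) (hXcl : IsClosed X) (hXcv : Convex ℝ X)
    (A : EuclideanSpace ℝ (Fin n) →L[ℝ] EuclideanSpace ℝ (Fin m))
    (b : EuclideanSpace ℝ (Fin m))
    (h : Fin J → EuclideanSpace ℝ (Fin n) → ℝ)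
    (hsmooth : ∀ j, ContDiff ℝ 1 (h j))
    (hconv : ∀ j, ConvexOn ℝ Set.univ (h j))
    (hfeas : {x | x ∈ X ∧ A x = b ∧ ∀ j, h j x ≤ 0}.Nonempty)
    (F : EuclideanSpace ℝ (Fin n) → EuclideanSpace ℝ (Fin n))
    (hF : ∀ x, F x = ContinuousLinearMap.adjoint A (A x - b)
      + ∑ j, max 0 (h j x) • gradient (h j) x) :
    VISol X F = {x | x ∈ X ∧ A x = b ∧ ∀ j, h j x ≤ 0} :=
  VISol_eq_feasible_set_general X A b h hsmooth hconv hfeas F hF
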